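/- Let K in Q[[Q]] be any formal power series whose constant coefficient is nonzero (so K is invertible). Then the set {z in Q[[Q]][s] : D_Q~(D_Q~(K^{-1} * D_Q~(D_Q~ z))) = 0} is a Q-vector subspace of Q[[Q]][s] of dimension exactly 4, and it contains the elements 1 and s. (This describes the solution space of the quantum differential operator D^2 (1/K) D^2 of the Pfaffian Calabi-Yau 3-fold.) -/

import Mathlib

open PowerSeries

/-- The operator `D_Q = Q * d/dQ` on `ℚ[[Q]]` (here `Q` is `PowerSeries.X`). -/
noncomputable def Dop (f : ℚ⟦X⟧) : ℚ⟦X⟧ := X * derivative ℚ f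

/-- The extension of `D_Q` to the derivation on `ℚ[[Q]][s]` with `D_Q s = 1`
(where `s` plays the role of `ln Q`). -/
noncomputable def Dt (y : Polynomial ℚ⟦X⟧) : Polynomial ℚ⟦X⟧ :=
  Polynomial.derivative y + y.sum fun n a => Polynomial.C (Dop a) * Polynomial.X ^ n

/-- For any `K ∈ ℚ⟦X⟧` with nonzero constant coefficient, the solution set of the
quantum differential operator `D² (1/K) D²` in `ℚ[[Q]][s]` is a `ℚ`-vector subspace
of dimension exactly `4` containing `1` and `s`. -/
lemma coeff_Dop (f : ℚ⟦X⟧) (n : ℕ) : coeff n (Dop f) = n * coeff n f := by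
  cases n with
  | zero => simp [Dop]
  | succ m => rw [Dop, coeff_succ_X_mul, coeff_derivative]; push_cast; ring

lemma Dop_add (f g : ℚ⟦X⟧) : Dop (f + g) = Dop f + Dop g := by
  simp [Dop, mul_add]

lemma Dop_zero : Dop 0 = 0 := by simp [Dop]

lemma Dop_one : Dop 1 = 0 := by simp [Dop]

lemma Dop_smul (q : ℚ) (f : ℚ⟦X⟧) : Dop (q • f) = q • Dop f := by
  ext n; simp [coeff_Dop]; ring

lemma Dop_C (c : ℚ) : Dop (C c) = 0 := by simp [Dop]

noncomputable def Iop (f : ℚ⟦X⟧) : ℚ⟦X⟧ := mk fun n => if n = 0 then 0 else coeff n f / n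

lemma constantCoeff_Iop (f : ℚ⟦X⟧) : constantCoeff (Iop f) = 0 := by
  simp [Iop, ← coeff_zero_eq_constantCoeff]

lemma Dop_Iop (f : ℚ⟦X⟧) : Dop (Iop f) = f - C (constantCoeff f) := by
  ext n
  rw [coeff_Dop]
  rcases Nat.eq_zero_or_pos n with hn | hn
  · subst hn
    rw [coeff_zero_eq_constantCoeff]
    simp
  · have hn' : (n : ℚ) ≠ 0 := Nat.cast_ne_zero.mpr hn.ne'
    rw [Iop, coeff_mk, if_neg hn.ne', map_sub, coeff_C, if_neg hn.ne', sub_zero]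
    field_simp

lemma coeff_sumDop (z : Polynomial ℚ⟦X⟧) (n : ℕ) :
    (z.sum fun n a => Polynomial.C (Dop a) * Polynomial.X ^ n).coeff n = Dop (z.coeff n) := by
  rw [Polynomial.sum_def, Polynomial.finset_sum_coeff]
  simp only [Polynomial.C_mul_X_pow_eq_monomial, Polynomial.coeff_monomial]
  rw [Finset.sum_ite_eq' z.support n (fun m => Dop (z.coeff m))]
  split_ifs with h
  · rfl
  · rw [Polynomial.notMem_support_iff.mp h, Dop_zero]

lemma coeff_Dt (z : Polynomial ℚ⟦X⟧) (n : ℕ) :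
    (Dt z).coeff n = z.coeff (n+1) * (n+1 : ℕ) + Dop (z.coeff n) := by
  rw [Dt, Polynomial.coeff_add, Polynomial.coeff_derivative, coeff_sumDop]
  push_cast
  ring

lemma Dt_monomial (n : ℕ) (a : ℚ⟦X⟧) :
    Dt (Polynomial.monomial n a) =
      Polynomial.monomial (n-1) (a * n) + Polynomial.monomial n (Dop a) := by
  rw [Dt, Polynomial.derivative_monomial]
  congr 1
  rcases eq_or_ne a 0 with rfl | h
  · simp [Dop_zero]
  · rw [Polynomial.sum_monomial_index a _ (by simp [Dop_zero]),
      Polynomial.C_mul_X_pow_eq_monomial]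

lemma Dt_add (y z : Polynomial ℚ⟦X⟧) : Dt (y + z) = Dt y + Dt z := by
  ext n
  simp only [coeff_Dt, Polynomial.coeff_add, Dop_add]
  ring

lemma Dt_smul (q : ℚ) (z : Polynomial ℚ⟦X⟧) : Dt (q • z) = q • Dt z := by
  ext n
  simp only [coeff_Dt, Polynomial.coeff_smul, Dop_smul, smul_add, smul_mul_assoc]

noncomputable def DtL : Polynomial ℚ⟦X⟧ →ₗ[ℚ] Polynomial ℚ⟦X⟧ where
  toFun := Dt
  map_add' := Dt_add
  map_smul' := Dt_smul

lemma Dt_zero : Dt 0 = 0 := map_zero DtL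

lemma Dt_sub (y z : Polynomial ℚ⟦X⟧) : Dt (y - z) = Dt y - Dt z := map_sub DtL y z

lemma Dt_C (a : ℚ⟦X⟧) : Dt (Polynomial.C a) = Polynomial.C (Dop a) := by
  have := Dt_monomial 0 a
  simpa using this

lemma Dt_one : Dt 1 = 0 := by
  have := Dt_C 1
  simpa [Dop_one] using this

lemma Dt_X : Dt (Polynomial.X : Polynomial ℚ⟦X⟧) = 1 := by
  have := Dt_monomial 1 1
  simpa [Dop_one, Polynomial.monomial_one_one_eq_X] using this

lemma qsmul_one (c : ℚ) : (c • 1 : Polynomial ℚ⟦X⟧) = Polynomial.C (C c) := by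
  ext n m
  rcases eq_or_ne n 0 with rfl | hn
  · simp only [Polynomial.coeff_smul, Polynomial.coeff_one_zero, Polynomial.coeff_C_zero]
    rw [PowerSeries.coeff_smul, ← map_one (C (R := ℚ))]
    simp only [coeff_C]
    split_ifs <;> simp
  · simp only [Polynomial.coeff_smul, Polynomial.coeff_C, if_neg hn, Polynomial.coeff_one,
      if_neg hn, smul_zero]

lemma Dt_ker {z : Polynomial ℚ⟦X⟧} (h : Dt z = 0) :
    ∃ c : ℚ, z = c • 1 := by
  refine ⟨coeff 0 (z.coeff 0), ?_⟩
  rw [qsmul_one]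
  set A : ℕ → ℕ → ℚ := fun n m => coeff m (z.coeff n) with hA
  have key : ∀ n m : ℕ, A (n+1) m * (n+1) + m * A n m = 0 := by
    intro n m
    have h1 : (Dt z).coeff n = 0 := by rw [h]; rfl
    rw [coeff_Dt] at h1
    have := congrArg (coeff m) h1
    rw [map_add, coeff_Dop, show ((n+1:ℕ) : ℚ⟦X⟧) = C ((n+1:ℕ):ℚ) by push_cast; simp,
      mul_comm, coeff_C_mul, map_zero] at this
    convert this using 2 <;> push_cast <;> ring
  have main : ∀ n m : ℕ, (n.factorial : ℚ) * A n m = (-(m:ℚ))^n * A 0 m := by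
    intro n m
    induction n with
    | zero => simp
    | succ k ih =>
      have hk := key k m
      have h2 : A (k+1) m * (k+1) = -(m * A k m) := by linarith
      calc ((k+1).factorial : ℚ) * A (k+1) m
          = (k.factorial : ℚ) * (A (k+1) m * (k+1)) := by
            rw [Nat.factorial_succ]; push_cast; ring
        _ = (k.factorial : ℚ) * (-(m * A k m)) := by rw [h2]
        _ = (-(m:ℚ)) * ((k.factorial : ℚ) * A k m) := by ring
        _ = (-(m:ℚ))^(k+1) * A 0 m := by rw [ih]; ring
  have hA0 : ∀ m : ℕ, 1 ≤ m → A 0 m = 0 := by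
    intro m hm
    set N := z.natDegree + 1
    have hzN : z.coeff N = 0 := z.coeff_natDegree_succ_eq_zero
    have : (N.factorial : ℚ) * A N m = 0 := by simp [hA, hzN]
    rw [main] at this
    have hne : (-(m:ℚ))^N ≠ 0 := by
      apply pow_ne_zero
      simp only [neg_ne_zero, Nat.cast_ne_zero]
      omega
    exact (mul_eq_zero.mp this).resolve_left hne
  have hAall : ∀ n m : ℕ, 1 ≤ m → A n m = 0 := by
    intro n m hm
    have := main n m
    rw [hA0 m hm, mul_zero] at this
    have hf : (n.factorial : ℚ) ≠ 0 := Nat.cast_ne_zero.mpr n.factorial_ne_zero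
    exact (mul_eq_zero.mp this).resolve_left hf
  have hAzero : ∀ n : ℕ, 1 ≤ n → A n 0 = 0 := by
    intro n hn
    obtain ⟨k, rfl⟩ := Nat.exists_eq_add_of_le hn
    have := key k 0
    simp only [Nat.cast_zero, zero_mul, add_zero] at this
    have h3 : A (k+1) 0 = 0 := by
      have hne : ((k:ℚ)+1) ≠ 0 := by positivity
      have := mul_eq_zero.mp this
      push_cast at this hne
      tauto
    convert h3 using 2
    omega
  ext n m
  rcases Nat.eq_zero_or_pos n with rfl | hn
  · rcases Nat.eq_zero_or_pos m with rfl | hm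
    · simp [coeff_C]
    · rw [Polynomial.coeff_C_zero]
      rw [coeff_C, if_neg hm.ne']
      exact hAall 0 m hm
  · rw [Polynomial.coeff_C, if_neg hn.ne']
    rcases Nat.eq_zero_or_pos m with rfl | hm
    · have := hAzero n hn
      simpa [hA] using this
    · simpa using hAall n m hm

lemma mul_natCast (a : ℚ⟦X⟧) (n : ℕ) : a * ((n:ℕ):ℚ⟦X⟧) = (n:ℚ) • a := by
  rw [← map_natCast (C (R := ℚ)) n, mul_comm]
  ext m
  rw [coeff_C_mul, map_smul]
  simp [smul_eq_mul]

lemma smul_CPS (q a : ℚ) : q • C a = C (q * a) := by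
  ext m
  rw [map_smul]
  simp [coeff_C, smul_eq_mul, mul_ite, mul_zero]

noncomputable def z2 (K : ℚ⟦X⟧) : Polynomial ℚ⟦X⟧ :=
  Polynomial.C (Iop (Iop K)) + Polynomial.monomial 2 (C (constantCoeff K / 2))

noncomputable def z3 (K : ℚ⟦X⟧) : Polynomial ℚ⟦X⟧ :=
  Polynomial.C ((-2 : ℚ) • Iop (Iop (Iop K))) + Polynomial.monomial 1 (Iop (Iop K))
    + Polynomial.monomial 3 (C (constantCoeff K / 6))

lemma Dt_z2 (K : ℚ⟦X⟧) : Dt (z2 K) =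
    Polynomial.C (Iop K) + Polynomial.monomial 1 (C (constantCoeff K)) := by
  rw [z2, Dt_add, Dt_C, Dt_monomial, Dop_Iop, constantCoeff_Iop, map_zero, sub_zero, Dop_C,
    mul_natCast, smul_CPS,
    show ((2:ℕ):ℚ) * (constantCoeff K / 2) = constantCoeff K by push_cast; ring]
  simp only [Polynomial.monomial_zero_right, add_zero, Nat.reduceSub]

lemma Dt_Dt_z2 (K : ℚ⟦X⟧) : Dt (Dt (z2 K)) = Polynomial.C K := by
  rw [Dt_z2, Dt_add, Dt_C, Dt_monomial, Dop_Iop, Dop_C, mul_natCast, smul_CPS,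
    show ((1:ℕ):ℚ) * constantCoeff K = constantCoeff K by push_cast; ring]
  simp only [Polynomial.monomial_zero_right, add_zero, Nat.reduceSub,
    Polynomial.monomial_zero_left]
  rw [← map_add, sub_add_cancel]

lemma Dt_z3 (K : ℚ⟦X⟧) : Dt (z3 K) =
    Polynomial.C ((-1 : ℚ) • Iop (Iop K)) + Polynomial.monomial 1 (Iop K)
      + Polynomial.monomial 2 (C (constantCoeff K / 2)) := by
  rw [z3, Dt_add, Dt_add, Dt_C, Dt_monomial, Dt_monomial, Dop_smul, Dop_Iop, Dop_Iop, Dop_C,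
    constantCoeff_Iop, constantCoeff_Iop, map_zero, map_zero, sub_zero, sub_zero]
  simp only [mul_natCast, smul_CPS, Nat.cast_one, one_smul, mul_one,
    Polynomial.monomial_zero_right, add_zero, Nat.reduceSub, Polynomial.monomial_zero_left]
  rw [show ((3:ℕ):ℚ) * (constantCoeff K / 6) = constantCoeff K / 2 by push_cast; ring]
  rw [show Polynomial.C ((-2:ℚ) • Iop (Iop K)) + (Polynomial.C (Iop (Iop K)) +
      Polynomial.monomial 1 (Iop K)) = Polynomial.C ((-1:ℚ) • Iop (Iop K)) +
      Polynomial.monomial 1 (Iop K) by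
    rw [← add_assoc, ← map_add]
    congr 2
    module]

lemma Dt_Dt_z3 (K : ℚ⟦X⟧) : Dt (Dt (z3 K)) = Polynomial.C K * Polynomial.X := by
  rw [Dt_z3, Dt_add, Dt_add, Dt_C, Dt_monomial, Dt_monomial, Dop_smul, Dop_Iop, Dop_Iop, Dop_C,
    constantCoeff_Iop, map_zero, sub_zero]
  simp only [mul_natCast, smul_CPS, Nat.cast_one, one_smul, mul_one,
    Polynomial.monomial_zero_right, add_zero, Nat.reduceSub, Polynomial.monomial_zero_left]
  rw [show ((2:ℕ):ℚ) * (constantCoeff K / 2) = constantCoeff K by push_cast; ring]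
  rw [Polynomial.C_mul_X_eq_monomial]
  rw [show Polynomial.C ((-1:ℚ) • Iop K) + (Polynomial.C (Iop K) +
      Polynomial.monomial 1 (K - C (constantCoeff K))) =
      Polynomial.monomial 1 (K - C (constantCoeff K)) by
    rw [← add_assoc, ← map_add, show (-1:ℚ) • Iop K + Iop K = 0 by module, map_zero, zero_add]]
  rw [← map_add]
  congr 1
  ring

noncomputable def L2 : Polynomial ℚ⟦X⟧ →ₗ[ℚ] Polynomial ℚ⟦X⟧ := DtL ∘ₗ DtL

lemma L2_apply (z : Polynomial ℚ⟦X⟧) : L2 z = Dt (Dt z) := rfl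

/-- For any `K ∈ ℚ[[Q]]` with nonzero constant coefficient, the solution set of the
quantum differential operator `D² (1/K) D²` in `ℚ[[Q]][s]` is a `ℚ`-vector subspace
of dimension exactly `4` containing `1` and `s`. -/
theorem quantum_operator_solution_space (K : ℚ⟦X⟧) (hK : constantCoeff K ≠ 0) :
    ∃ V : Submodule ℚ (Polynomial ℚ⟦X⟧),
      (V : Set (Polynomial ℚ⟦X⟧)) =
          {z | Dt (Dt (Polynomial.C K⁻¹ * Dt (Dt z))) = 0} ∧
        Module.rank ℚ V = 4 ∧ (1 : Polynomial ℚ⟦X⟧) ∈ V ∧ Polynomial.X ∈ V := by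
  have hKne : K ≠ 0 := fun h => hK (by rw [h, map_zero])
  set v : Fin 4 → Polynomial ℚ⟦X⟧ := ![1, Polynomial.X, z2 K, z3 K] with hv
  refine ⟨Submodule.span ℚ (Set.range v), ?_, ?_, ?_, ?_⟩
  · -- set equality
    have hinv : Polynomial.C K⁻¹ * Polynomial.C K = (1 : Polynomial ℚ⟦X⟧) := by
      rw [← map_mul, PowerSeries.inv_mul_cancel K hK, map_one]
    set M : Polynomial ℚ⟦X⟧ →ₗ[ℚ] Polynomial ℚ⟦X⟧ :=
      L2 ∘ₗ (LinearMap.mulLeft ℚ (Polynomial.C K⁻¹)) ∘ₗ L2 with hM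
    have hMapply : ∀ z, M z = Dt (Dt (Polynomial.C K⁻¹ * Dt (Dt z))) := fun z => rfl
    have m0 : (1 : Polynomial ℚ⟦X⟧) ∈ Submodule.span ℚ (Set.range v) :=
      Submodule.subset_span ⟨0, by rw [hv]; rfl⟩
    have m1 : (Polynomial.X : Polynomial ℚ⟦X⟧) ∈ Submodule.span ℚ (Set.range v) :=
      Submodule.subset_span ⟨1, by rw [hv]; rfl⟩
    have m2 : z2 K ∈ Submodule.span ℚ (Set.range v) :=
      Submodule.subset_span ⟨2, by rw [hv]; rfl⟩
    have m3 : z3 K ∈ Submodule.span ℚ (Set.range v) :=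
      Submodule.subset_span ⟨3, by rw [hv]; rfl⟩
    have hsub : Submodule.span ℚ (Set.range v) ≤ LinearMap.ker M := by
      rw [Submodule.span_le]
      rintro _ ⟨i, rfl⟩
      fin_cases i <;>
        simp only [hv, Matrix.cons_val_zero, Matrix.cons_val_one, Matrix.head_cons,
          Matrix.cons_val_two, Matrix.tail_cons, Matrix.cons_val_three, SetLike.mem_coe,
          LinearMap.mem_ker, hMapply]
      · show Dt (Dt (Polynomial.C K⁻¹ * Dt (Dt (1 : Polynomial ℚ⟦X⟧)))) = 0
        rw [Dt_one, Dt_zero, mul_zero, Dt_zero, Dt_zero]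
      · show Dt (Dt (Polynomial.C K⁻¹ * Dt (Dt (Polynomial.X : Polynomial ℚ⟦X⟧)))) = 0
        rw [Dt_X, Dt_one, mul_zero, Dt_zero, Dt_zero]
      · show Dt (Dt (Polynomial.C K⁻¹ * Dt (Dt (z2 K)))) = 0
        rw [Dt_Dt_z2, ← map_mul, PowerSeries.inv_mul_cancel K hK, map_one, Dt_one, Dt_zero]
      · show Dt (Dt (Polynomial.C K⁻¹ * Dt (Dt (z3 K)))) = 0
        rw [Dt_Dt_z3, ← mul_assoc, hinv, one_mul, Dt_X, Dt_one]
    ext z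
    simp only [SetLike.mem_coe, Set.mem_setOf_eq]
    constructor
    · intro hz
      have := hsub hz
      rw [LinearMap.mem_ker, hMapply] at this
      exact this
    · intro hz
      obtain ⟨c₁, hc₁⟩ := Dt_ker hz
      have h2 : Dt (Polynomial.C K⁻¹ * Dt (Dt z) - c₁ • Polynomial.X) = 0 := by
        rw [Dt_sub, Dt_smul, Dt_X, hc₁, sub_self]
      obtain ⟨c₀, hc₀⟩ := Dt_ker h2
      rw [sub_eq_iff_eq_add] at hc₀
      have hDDz : Dt (Dt z) = c₀ • Polynomial.C K + c₁ • (Polynomial.C K * Polynomial.X) := by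
        have h5 := congrArg (fun p => Polynomial.C K * p) hc₀
        rw [← mul_assoc, mul_comm (Polynomial.C K) (Polynomial.C K⁻¹), hinv, one_mul] at h5
        rw [h5, mul_add, mul_smul_comm, mul_smul_comm, mul_one]
      have h3 : Dt (Dt (z - c₀ • z2 K - c₁ • z3 K)) = 0 := by
        have hL : L2 (z - c₀ • z2 K - c₁ • z3 K)
            = L2 z - c₀ • L2 (z2 K) - c₁ • L2 (z3 K) := by
          simp only [map_sub, map_smul]
        rw [show Dt (Dt (z - c₀ • z2 K - c₁ • z3 K)) = L2 (z - c₀ • z2 K - c₁ • z3 K) from rfl,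
          hL, L2_apply, L2_apply, L2_apply, hDDz, Dt_Dt_z2, Dt_Dt_z3]
        abel
      obtain ⟨d₁, hd₁⟩ := Dt_ker h3
      have h4 : Dt (z - c₀ • z2 K - c₁ • z3 K - d₁ • Polynomial.X) = 0 := by
        rw [Dt_sub, Dt_smul, Dt_X, hd₁, sub_self]
      obtain ⟨d₀, hd₀⟩ := Dt_ker h4
      rw [sub_eq_iff_eq_add, sub_eq_iff_eq_add, sub_eq_iff_eq_add] at hd₀
      rw [hd₀]
      exact add_mem (add_mem (add_mem (Submodule.smul_mem _ _ m0)
        (Submodule.smul_mem _ _ m1)) (Submodule.smul_mem _ _ m3))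
        (Submodule.smul_mem _ _ m2)
  · -- rank
    have hli : LinearIndependent ℚ v := by
      rw [Fintype.linearIndependent_iff]
      intro g hg
      rw [Fin.sum_univ_four] at hg
      simp only [hv, Matrix.cons_val_zero, Matrix.cons_val_one, Matrix.head_cons,
        Matrix.cons_val_two, Matrix.tail_cons, Matrix.cons_val_three] at hg
      have hg2 : L2 (g 0 • 1 + g 1 • Polynomial.X + g 2 • z2 K + g 3 • z3 K) = 0 := by
        rw [hg, map_zero]
      rw [map_add, map_add, map_add, map_smul, map_smul, map_smul, map_smul] at hg2
      rw [L2_apply, L2_apply, L2_apply, L2_apply, Dt_one, Dt_zero, Dt_X, Dt_one,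
        Dt_Dt_z2, Dt_Dt_z3, smul_zero, smul_zero, zero_add, zero_add] at hg2
      have h2 : g 2 = 0 := by
        have := congrArg (fun p => Polynomial.coeff p 0) hg2
        simp only [Polynomial.coeff_add, Polynomial.coeff_smul, Polynomial.coeff_C_zero,
          Polynomial.coeff_C_mul, Polynomial.coeff_X_zero, mul_zero, smul_zero, add_zero,
          Polynomial.coeff_zero] at this
        exact (smul_eq_zero.mp this).resolve_right hKne
      have h3 : g 3 = 0 := by
        have := congrArg (fun p => Polynomial.coeff p 1) hg2
        simp only [Polynomial.coeff_add, Polynomial.coeff_smul, Polynomial.coeff_C,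
          Polynomial.coeff_C_mul, Polynomial.coeff_X_one, mul_one, one_ne_zero, if_false,
          smul_zero, zero_add, Polynomial.coeff_zero] at this
        exact (smul_eq_zero.mp this).resolve_right hKne
      rw [h2, h3, zero_smul, zero_smul, add_zero, add_zero] at hg
      have h0 : g 0 = 0 := by
        have := congrArg (fun p => Polynomial.coeff p 0) hg
        simp only [Polynomial.coeff_add, Polynomial.coeff_smul, Polynomial.coeff_one_zero,
          Polynomial.coeff_X_zero, smul_zero, add_zero, Polynomial.coeff_zero,
          smul_eq_mul] at this
        simpa using (smul_eq_zero.mp this).resolve_right one_ne_zero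
      have h1 : g 1 = 0 := by
        have := congrArg (fun p => Polynomial.coeff p 1) hg
        simp only [Polynomial.coeff_add, Polynomial.coeff_smul, Polynomial.coeff_one,
          Polynomial.coeff_X_one, one_ne_zero, if_false, smul_zero, zero_add,
          Polynomial.coeff_zero] at this
        simpa using (smul_eq_zero.mp this).resolve_right one_ne_zero
      intro i
      fin_cases i <;> assumption
    rw [rank_span hli, Cardinal.mk_range_eq v hli.injective, Cardinal.mk_fin]
    norm_num
  · exact Submodule.subset_span ⟨0, by rw [hv]; rfl⟩
  · exact Submodule.subset_span ⟨1, by rw [hv]; rfl⟩
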